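/- Let α₁, ..., α_n be a basis of a real inner product space E and let s_i be the orthogonal reflection through the hyperplane orthogonal to α_i. Then w = s_1 s_2 ··· s_n fixes no nonzero vector of E. -/

import Mathlib

/-!
Each reflection `s i` moves a vector by a multiple of `α i`, so a product of the `s i` over a
list of indices moves every vector by an element of the span of the corresponding `α i`. If
`s i₁ ⋯ s iₖ` (distinct indices) fixes `v`, then with `u = s i₂ ⋯ s iₖ v` the difference `u - v`
lies both in `ℝ ∙ α i₁` and in the span of `α i₂, …, α iₖ`; linear independence forces `u = v`,
so `s i₁` fixes `v` and induction shows that every factor does. A reflection fixes `v` only if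
`v ⊥ α i`, and a vector orthogonal to a basis is zero.
-/

open Submodule
open scoped RealInnerProductSpace

section

variable {ι R M : Type*} [Ring R] [AddCommGroup M] [Module R M]
  {f : ι → Module.End R M} {α : ι → M}

theorem prod_map_apply_sub_self_mem_span (hf : ∀ i u, f i u - u ∈ R ∙ α i) (l : List ι) (u : M) :
    (l.map f).prod u - u ∈ span R (α '' {i | i ∈ l}) := by
  induction l with
  | nil => simp
  | cons i l ih =>
    rw [List.map_cons, List.prod_cons, Module.End.mul_apply,
      ← sub_add_sub_cancel _ ((l.map f).prod u)]
    refine add_mem (span_mono ?_ (hf i _)) (span_mono ?_ ih)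
    · exact Set.singleton_subset_iff.mpr ⟨i, List.mem_cons_self, rfl⟩
    · exact Set.image_mono fun j hj => List.mem_cons_of_mem i hj

theorem LinearIndependent.apply_eq_self_of_prod_map_apply_eq_self (hα : LinearIndependent R α)
    (hf : ∀ i u, f i u - u ∈ R ∙ α i) {l : List ι} (hl : l.Nodup) {v : M}
    (hv : (l.map f).prod v = v) : ∀ i ∈ l, f i v = v := by
  induction l with
  | nil => simp
  | cons i l ih =>
    rw [List.nodup_cons] at hl
    rw [List.map_cons, List.prod_cons, Module.End.mul_apply] at hv
    have hu : (l.map f).prod v = v := by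
      set u := (l.map f).prod v
      have h_span_l : u - v ∈ span R (α '' {j | j ∈ l}) :=
        prod_map_apply_sub_self_mem_span hf l v
      have h_span_i : u - v ∈ span R (α '' {i}) := by
        rw [Set.image_singleton, ← neg_sub, ← hv]
        exact neg_mem (hf i u)
      have h_disj := hα.disjoint_span_image (s := {i}) (t := {j | j ∈ l})
        (Set.disjoint_singleton_left.mpr hl.1)
      exact sub_eq_zero.mp (disjoint_def.mp h_disj _ h_span_i h_span_l)
    intro j hj
    rcases List.mem_cons.mp hj with rfl | hj
    · rwa [hu] at hv
    · exact ih hl.2 hu j hj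

end

section

variable {E : Type*} [NormedAddCommGroup E] [InnerProductSpace ℝ E]

theorem reflection_apply_sub_self_mem_span (v a : E) :
    v - (2 * ⟪v, a⟫ / ⟪a, a⟫) • a - v ∈ ℝ ∙ a :=
  mem_span_singleton.mpr ⟨-(2 * ⟪v, a⟫ / ⟪a, a⟫), by rw [sub_sub_cancel_left, neg_smul]⟩

theorem inner_eq_zero_of_reflection_apply_eq_self {v a : E}
    (h : v - (2 * ⟪v, a⟫ / ⟪a, a⟫) • a = v) : ⟪v, a⟫ = 0 := by
  rw [sub_eq_self, smul_eq_zero, div_eq_zero_iff, mul_eq_zero] at h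
  rcases h with ((h | h) | h) | rfl
  · norm_num at h
  · exact h
  · rw [inner_self_eq_zero.mp h, inner_zero_right]
  · exact inner_zero_right v

end

theorem stmt13_general (E : Type*) [NormedAddCommGroup E] [InnerProductSpace ℝ E]
    (n : ℕ) (α : Fin n → E)
    (hindep : LinearIndependent ℝ α)
    (hspan : Submodule.span ℝ (Set.range α) = ⊤)
    (s : Fin n → E →ₗ[ℝ] E)
    (hs : ∀ i v, s i v = v - (2 * ⟪v, α i⟫ / ⟪α i, α i⟫) • α i)
    (w : E →ₗ[ℝ] E) (hw : w = (List.ofFn s).prod) :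
    ∀ v : E, w v = v → v = 0 := by
  intro v hv
  rw [hw, List.ofFn_eq_map] at hv
  have hs_sub : ∀ i u, s i u - u ∈ ℝ ∙ α i := fun i u => by
    rw [hs]; exact reflection_apply_sub_self_mem_span u (α i)
  have hfix : ∀ i, s i v = v := fun i =>
    hindep.apply_eq_self_of_prod_map_apply_eq_self hs_sub (List.nodup_finRange n) hv i
      (List.mem_finRange i)
  have horth : ∀ i, ⟪α i, v⟫ = 0 := fun i => by
    rw [real_inner_comm]
    exact inner_eq_zero_of_reflection_apply_eq_self ((hs i v).symm.trans (hfix i))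
  refine InnerProductSpace.ext_inner_left_basis (Module.Basis.mk hindep hspan.ge) fun i => ?_
  rw [Module.Basis.mk_apply, horth i, inner_zero_right]

/-- Let `α₁, …, α_n` be a basis of a real inner product space `E` and let `s i` be the
orthogonal reflection through the hyperplane orthogonal to `α i`.  Then
`w = s₁ s₂ ⋯ s_n` fixes no nonzero vector of `E`. -/
theorem stmt13 (E : Type*) [NormedAddCommGroup E] [InnerProductSpace ℝ E]
    [FiniteDimensional ℝ E]
    (n : ℕ) (α : Fin n → E)
    (hindep : LinearIndependent ℝ α)
    (hspan : Submodule.span ℝ (Set.range α) = ⊤)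
    (s : Fin n → E →ₗ[ℝ] E)
    (hs : ∀ i v, s i v = v - (2 * ⟪v, α i⟫ / ⟪α i, α i⟫) • α i)
    (w : E →ₗ[ℝ] E) (hw : w = (List.ofFn s).prod) :
    ∀ v : E, w v = v → v = 0 :=
  stmt13_general E n α hindep hspan s hs w hw
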